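/- Let ν > 0, l > 0, and A, B ∈ ℝ with A < B, and set H = 2ν(B − A) − l·A·B. If H > 0 and u : ℝ → ℝ is twice continuously differentiable on [0, l], satisfies the stationary Burgers equation ν u''(x) = u(x) u'(x) on [0, l] with u(0) = A and u(l) = B, then there exist k₀ > 0 and x₀ ∈ ℝ such that sin(k₀(x − x₀)) ≠ 0 for all x ∈ [0, l] and u(x) = −2ν k₀ cot(k₀ (x − x₀)) for all x ∈ [0, l]. -/

import Mathlib

/-!
Integrating `ν u'' = u u'` once gives `ν u' - u² / 2 = c`, so `w = u / (2ν)` solves the Riccati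
equation `w' = w² + κ` with `κ = c / (2ν²)`. If `κ = k² > 0`, then `arctan (w / k)` has derivative
`k`, which is the cotangent profile. If `κ ≤ 0`, the Cole–Hopf substitution `φ = exp (-∫ w)`
linearises the equation to `φ'' = -κ φ ≥ 0` with `φ > 0`. Since `w 0 < w l`, `φ'` cannot change
sign, and then the root `x - φ / φ'` of the tangent line of `φ` at `x` moves to the right; comparing
it at `0` and `l` gives `2ν (B - A) ≤ l A B`, i.e. `H ≤ 0`.
-/

open Set Real

theorem eqOn_Icc_of_hasDerivAt_eq {f g f' : ℝ → ℝ} {a b : ℝ}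
    (hf : ∀ x ∈ Icc a b, HasDerivAt f (f' x) x) (hg : ∀ x ∈ Icc a b, HasDerivAt g (f' x) x)
    (ha : f a = g a) : EqOn f g (Icc a b) :=
  eq_of_has_deriv_right_eq (fun x hx ↦ (hf x (Ico_subset_Icc_self hx)).hasDerivWithinAt)
    (fun x hx ↦ (hg x (Ico_subset_Icc_self hx)).hasDerivWithinAt)
    (HasDerivAt.continuousOn hf) (HasDerivAt.continuousOn hg) ha

theorem exists_hasDerivAt_of_continuousOn_Icc {w : ℝ → ℝ} {a b : ℝ} (hab : a ≤ b)
    (hw : ContinuousOn w (Icc a b)) : ∃ F : ℝ → ℝ, ∀ x ∈ Icc a b, HasDerivAt F (w x) x := by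
  have hv : Continuous fun x ↦ w (projIcc a b hab x) :=
    hw.comp_continuous (continuous_subtype_val.comp continuous_projIcc)
      fun x ↦ (projIcc a b hab x).2
  refine ⟨fun x ↦ ∫ t in a..x, w (projIcc a b hab t), fun x hx ↦ ?_⟩
  simpa [projIcc_of_mem hab hx] using (hv.integral_hasStrictDerivAt a x).hasDerivAt

theorem burgers_first_integral {ν a b : ℝ} {u u' u'' : ℝ → ℝ}
    (hu : ∀ x ∈ Icc a b, HasDerivAt u (u' x) x) (hu' : ∀ x ∈ Icc a b, HasDerivAt u' (u'' x) x)
    (hode : ∀ x ∈ Icc a b, ν * u'' x = u x * u' x) :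
    ∀ x ∈ Icc a b, ν * u' x - u x ^ 2 / 2 = ν * u' a - u a ^ 2 / 2 := by
  refine eqOn_Icc_of_hasDerivAt_eq (f' := 0) (fun x hx ↦ ?_) (fun x _ ↦ hasDerivAt_const x _) rfl
  have h : HasDerivAt (fun y ↦ ν * u' y - u y ^ 2 / 2) (ν * u'' x - 2 * u x ^ 1 * u' x / 2) x :=
    ((hu' x hx).const_mul ν).sub (((hu x hx).pow 2).div_const 2)
  refine h.congr_deriv ?_
  rw [hode x hx, Pi.zero_apply]
  ring

theorem riccati_eq_neg_mul_cot {w w' : ℝ → ℝ} {a b k : ℝ} (hk : 0 < k)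
    (hw : ∀ x ∈ Icc a b, HasDerivAt w (w' x) x) (hric : ∀ x ∈ Icc a b, w' x = w x ^ 2 + k ^ 2) :
    ∃ x₀, ∀ x ∈ Icc a b, k * (x - x₀) ∈ Ioo 0 π ∧ w x = -k * cot (k * (x - x₀)) := by
  set θ : ℝ → ℝ := fun x ↦ arctan (w x / k)
  have hθ : EqOn θ (fun x ↦ θ a + k * (x - a)) (Icc a b) := by
    refine eqOn_Icc_of_hasDerivAt_eq (f' := fun _ ↦ k) (fun x hx ↦ ?_) (fun x _ ↦ ?_) (by simp)
    · convert ((hw x hx).div_const k).arctan using 1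
      rw [hric x hx]
      field_simp
      ring
    · simpa using (((hasDerivAt_id x).sub_const a).const_mul k).const_add (θ a)
  refine ⟨a - (θ a + π / 2) / k, fun x hx ↦ ?_⟩
  have hx₀ : k * (x - (a - (θ a + π / 2) / k)) = θ x + π / 2 := by
    rw [hθ hx]
    field_simp
    ring
  rw [hx₀]
  refine ⟨⟨by linarith [neg_pi_div_two_lt_arctan (w x / k)],
    by linarith [arctan_lt_pi_div_two (w x / k)]⟩, ?_⟩
  rw [cot_eq_cos_div_sin, cos_add_pi_div_two, sin_add_pi_div_two, neg_div, ← tan_eq_sin_div_cos,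
    tan_arctan]
  field_simp

theorem deriv_mul_sub_mul_deriv_le_of_convex_pos {φ φ' φ'' : ℝ → ℝ} {a b : ℝ} (hab : a ≤ b)
    (hφ : ∀ x ∈ Icc a b, HasDerivAt φ (φ' x) x) (hφ' : ∀ x ∈ Icc a b, HasDerivAt φ' (φ'' x) x)
    (hpos : ∀ x ∈ Icc a b, 0 < φ x) (hconv : ∀ x ∈ Icc a b, 0 ≤ φ'' x)
    (hlt : φ' b * φ a < φ' a * φ b) :
    φ' a * φ b - φ' b * φ a ≤ (b - a) * (φ' a * φ' b) := by
  have ha : a ∈ Icc a b := left_mem_Icc.2 hab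
  have hb : b ∈ Icc a b := right_mem_Icc.2 hab
  have hmono : MonotoneOn φ' (Icc a b) :=
    monotoneOn_of_hasDerivWithinAt_nonneg (convex_Icc a b) (HasDerivAt.continuousOn hφ')
      (fun x hx ↦ (hφ' x (interior_subset hx)).hasDerivWithinAt)
      (fun x hx ↦ hconv x (interior_subset hx))
  have hstraddle : ¬ (φ' a ≤ 0 ∧ 0 ≤ φ' b) := fun h ↦ by
    nlinarith [hpos a ha, hpos b hb]
  have hne : ∀ x ∈ Icc a b, φ' x ≠ 0 := fun x hx h0 ↦
    hstraddle ⟨h0 ▸ hmono ha hx hx.1, h0 ▸ hmono hx hb hx.2⟩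
  have hprod : 0 < φ' a * φ' b := by
    rcases (hne a ha).lt_or_gt with h | h
    · exact mul_pos_of_neg_of_neg h (lt_of_not_ge fun h' ↦ hstraddle ⟨h.le, h'⟩)
    · exact mul_pos h (h.trans_le (hmono ha hb hab))
  have hg : ∀ x ∈ Icc a b, HasDerivAt (fun x ↦ φ x / φ' x - x)
      ((φ' x * φ' x - φ x * φ'' x) / φ' x ^ 2 - 1) x := fun x hx ↦
    ((hφ x hx).div (hφ' x hx) (hne x hx)).sub (hasDerivAt_id x)
  have hanti : AntitoneOn (fun x ↦ φ x / φ' x - x) (Icc a b) := by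
    refine antitoneOn_of_hasDerivWithinAt_nonpos (convex_Icc a b) (HasDerivAt.continuousOn hg)
      (fun x hx ↦ (hg x (interior_subset hx)).hasDerivWithinAt) (fun x hx ↦ ?_)
    have hx := interior_subset hx
    have hφ'x := hne x hx
    rw [sub_nonpos, div_le_one (by positivity)]
    linarith [mul_nonneg (hpos x hx).le (hconv x hx)]
  have key : φ b / φ' b - b ≤ φ a / φ' a - a := hanti ha hb hab
  have hid : (b - a) * (φ' a * φ' b) - (φ' a * φ b - φ' b * φ a) =
      φ' a * φ' b * ((φ a / φ' a - a) - (φ b / φ' b - b)) := by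
    field_simp [hne a ha, hne b hb]
    ring
  rw [← sub_nonneg, hid]
  exact mul_nonneg hprod.le (sub_nonneg.2 key)

theorem riccati_sub_le_of_nonpos {w w' : ℝ → ℝ} {a b κ : ℝ} (hab : a ≤ b) (hκ : κ ≤ 0)
    (hw : ∀ x ∈ Icc a b, HasDerivAt w (w' x) x) (hric : ∀ x ∈ Icc a b, w' x = w x ^ 2 + κ)
    (hlt : w a < w b) : w b - w a ≤ (b - a) * (w a * w b) := by
  obtain ⟨F, hF⟩ := exists_hasDerivAt_of_continuousOn_Icc hab (HasDerivAt.continuousOn hw)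
  set φ : ℝ → ℝ := fun x ↦ exp (-F x)
  have hφpos : ∀ x, 0 < φ x := fun x ↦ exp_pos _
  have hφ : ∀ x ∈ Icc a b, HasDerivAt φ (-w x * φ x) x := fun x hx ↦ by
    simpa [φ, mul_comm] using (hF x hx).neg.exp
  have hφ' : ∀ x ∈ Icc a b, HasDerivAt (fun x ↦ -w x * φ x) (-κ * φ x) x := fun x hx ↦ by
    refine ((hw x hx).neg.mul (hφ x hx)).congr_deriv ?_
    rw [hric x hx, Pi.neg_apply]
    ring
  have hP : 0 < φ a * φ b := mul_pos (hφpos a) (hφpos b)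
  have h := deriv_mul_sub_mul_deriv_le_of_convex_pos hab hφ hφ' (fun x _ ↦ hφpos x)
    (fun x _ ↦ mul_nonneg (neg_nonneg.2 hκ) (hφpos x).le)
    (by linear_combination mul_lt_mul_of_pos_right hlt hP)
  refine le_of_mul_le_mul_right ?_ hP
  linear_combination h

theorem burgers_stationary_dirichlet_Hpos_cot_general
    (ν l A B H : ℝ) (hν : 0 < ν) (hl : 0 < l) (hAB : A < B)
    (hH : H = 2 * ν * (B - A) - l * A * B) (hHpos : 0 < H)
    (u u' u'' : ℝ → ℝ)
    (hder1 : ∀ x ∈ Set.Icc 0 l, HasDerivAt u (u' x) x)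
    (hder2 : ∀ x ∈ Set.Icc 0 l, HasDerivAt u' (u'' x) x)
    (hode : ∀ x ∈ Set.Icc 0 l, ν * u'' x = u x * u' x)
    (hbc0 : u 0 = A) (hbcl : u l = B) :
    ∃ k₀ : ℝ, 0 < k₀ ∧ ∃ x₀ : ℝ,
      (∀ x ∈ Set.Icc 0 l, Real.sin (k₀ * (x - x₀)) ≠ 0) ∧
      ∀ x ∈ Set.Icc 0 l, u x = -2 * ν * k₀ * Real.cot (k₀ * (x - x₀)) := by
  set κ := (ν * u' 0 - u 0 ^ 2 / 2) / (2 * ν ^ 2)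
  have hw : ∀ x ∈ Icc 0 l, HasDerivAt (fun x ↦ u x / (2 * ν)) (u' x / (2 * ν)) x :=
    fun x hx ↦ (hder1 x hx).div_const _
  have hric : ∀ x ∈ Icc 0 l, u' x / (2 * ν) = (u x / (2 * ν)) ^ 2 + κ := fun x hx ↦ by
    have hc := burgers_first_integral hder1 hder2 hode x hx
    simp only [κ]
    field_simp
    linear_combination 2 * hc
  have hκ : 0 < κ := by
    by_contra! hκ
    have h := riccati_sub_le_of_nonpos hl.le hκ hw hric
      (by simpa [hbc0, hbcl] using div_lt_div_of_pos_right hAB (by positivity : (0 : ℝ) < 2 * ν))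
    simp only [hbc0, hbcl, sub_zero] at h
    have hH' : H = 4 * ν ^ 2 *
        (B / (2 * ν) - A / (2 * ν) - l * (A / (2 * ν) * (B / (2 * ν)))) := by
      rw [hH]
      field_simp
      ring
    exact hHpos.not_ge (hH' ▸ mul_nonpos_of_nonneg_of_nonpos (by positivity) (by linarith))
  obtain ⟨x₀, hx₀⟩ := riccati_eq_neg_mul_cot (sqrt_pos.2 hκ) hw (by rwa [sq_sqrt hκ.le])
  refine ⟨√κ, sqrt_pos.2 hκ, x₀, fun x hx ↦ (sin_pos_of_mem_Ioo (hx₀ x hx).1).ne', fun x hx ↦ ?_⟩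
  have h := (hx₀ x hx).2
  rw [div_eq_iff (by positivity)] at h
  rw [h]
  ring

/-- When `A < B` and `H = 2ν(B − A) − l·A·B > 0`, any stationary solution of Burgers'
equation on `[0, l]` with `u(0) = A`, `u(l) = B` has the form
`u(x) = −2ν k₀ cot(k₀ (x − x₀))`, with `sin(k₀ (x − x₀))` nonvanishing on `[0, l]`. -/
theorem burgers_stationary_dirichlet_Hpos_cot
    (ν l A B H : ℝ) (hν : 0 < ν) (hl : 0 < l) (hAB : A < B)
    (hH : H = 2 * ν * (B - A) - l * A * B) (hHpos : 0 < H)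
    (u u' u'' : ℝ → ℝ)
    (hder1 : ∀ x ∈ Set.Icc 0 l, HasDerivAt u (u' x) x)
    (hder2 : ∀ x ∈ Set.Icc 0 l, HasDerivAt u' (u'' x) x)
    (hcont : ContinuousOn u'' (Set.Icc 0 l))
    (hode : ∀ x ∈ Set.Icc 0 l, ν * u'' x = u x * u' x)
    (hbc0 : u 0 = A) (hbcl : u l = B) :
    ∃ k₀ : ℝ, 0 < k₀ ∧ ∃ x₀ : ℝ,
      (∀ x ∈ Set.Icc 0 l, Real.sin (k₀ * (x - x₀)) ≠ 0) ∧
      ∀ x ∈ Set.Icc 0 l, u x = -2 * ν * k₀ * Real.cot (k₀ * (x - x₀)) :=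
  burgers_stationary_dirichlet_Hpos_cot_general ν l A B H hν hl hAB hH hHpos u u' u'' hder1 hder2
    hode hbc0 hbcl
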